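/- No prediction rule beats Follow-the-Leader by much: there exist absolute constants c > 0, d > 0 and K₀ ∈ ℕ such that for every integer K ≥ K₀, every ε with 0 < ε < d, and every integer T with c·ln K/(2ε²) ≤ T ≤ c·ln K/ε², and every prediction rule p : Ω → ℝ^K (with p_k(ω) ≥ 0 and ∑_{k=1}^K p_k(ω) = 1 for all ω), there are at least ⌈K/3⌉ indices j ∈ {1,…,K} with E_{P_j}[p_j(ω)] ≤ 3/4. -/

import Mathlib

/-
Let `Q` be the uniform measure on reward matrices. Then `P_j = L_j • Q`, where the likelihood ratio
`L_j(ω) = ∏_t (1 ± ε)` only looks at row `j`, and `E_Q[L_j²] = (1 + ε²)^T ≤ √K` once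
`T ≤ ln K / (2ε²)`. Since `L p ≤ M p + L²/M` for `p ∈ [0, 1]`, summing over `j` and using
`∑_j p_j = 1` gives `∑_j E_{P_j}[p_j] ≤ M + K √K / M`, which is at most `K/2` for `M = K/4` and
`K ≥ 256`. By Markov's inequality for counting, fewer than `2K/3` indices have `E_{P_j}[p_j] > 3/4`.
-/

open MeasureTheory

/-- The Bernoulli measure on `Bool` with success probability `p` (for `p ∈ [0,1]`). -/
noncomputable def bern (p : ℝ) : Measure Bool :=
  (PMF.bernoulli (min (Real.toNNReal p) 1) (min_le_right _ _)).toMeasure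

/-- The lower-bound instance `I_j`: the product measure on `K × T` reward matrices
under which all entries are independent, entries of row `j` are Bernoulli((1+ε)/2),
and entries of every other row are Bernoulli(1/2). -/
noncomputable def lowerP (K T : ℕ) (ε : ℝ) (j : Fin K) :
    Measure (Fin K → Fin T → Bool) :=
  Measure.pi fun k => Measure.pi fun _ : Fin T =>
    bern (if k = j then (1 + ε) / 2 else 1 / 2)

/-- The number of wins `w_k(ω) = #{t : ω_{k,t} = 1}` of arm `k`. -/
def wins {K T : ℕ} (ω : Fin K → Fin T → Bool) (k : Fin K) : ℕ :=
  (Finset.univ.filter fun t : Fin T => ω k t = true).card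

/-- The Follow-the-Leader prediction: the smallest index maximizing `w_k(ω)`. -/
noncomputable def FTL {K T : ℕ} [NeZero K] (ω : Fin K → Fin T → Bool) : Fin K :=
  (Finset.univ.filter fun k : Fin K => ∀ k', wins ω k' ≤ wins ω k).min' (by
    obtain ⟨b, -, hb⟩ :=
      Finset.exists_max_image Finset.univ (wins ω) Finset.univ_nonempty
    exact ⟨b, Finset.mem_filter.mpr
      ⟨Finset.mem_univ b, fun k' => hb k' (Finset.mem_univ k')⟩⟩)

lemma mul_le_mul_add_sq_div {L p M : ℝ} (hp₀ : 0 ≤ p) (hp₁ : p ≤ 1) (hM : 0 < M) :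
    L * p ≤ M * p + L ^ 2 / M := by
  rcases le_or_gt L M with hLM | hML
  · nlinarith [div_nonneg (sq_nonneg L) hM.le]
  · have : L ≤ L ^ 2 / M := by rw [le_div_iff₀ hM]; nlinarith
    nlinarith

lemma sum_sum_weight_mul_le {ι α : Type*} [Fintype ι] [Fintype α] {w : α → ℝ}
    (hw : ∀ a, 0 ≤ w a) (hw₁ : ∑ a, w a = 1) (L : ι → α → ℝ) {p : α → ι → ℝ}
    (hp₀ : ∀ a i, 0 ≤ p a i) (hp₁ : ∀ a, ∑ i, p a i = 1) {M : ℝ} (hM : 0 < M) :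
    ∑ i, ∑ a, w a * L i a * p a i ≤ M + (∑ i, ∑ a, w a * L i a ^ 2) / M := by
  have hp_le : ∀ a i, p a i ≤ 1 := fun a i =>
    hp₁ a ▸ Finset.single_le_sum (fun i _ => hp₀ a i) (Finset.mem_univ i)
  calc ∑ i, ∑ a, w a * L i a * p a i
      ≤ ∑ i, ∑ a, w a * (M * p a i + L i a ^ 2 / M) := by
        refine Finset.sum_le_sum fun i _ => Finset.sum_le_sum fun a _ => ?_
        rw [mul_assoc]
        exact mul_le_mul_of_nonneg_left (mul_le_mul_add_sq_div (hp₀ a i) (hp_le a i) hM) (hw a)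
    _ = M * ∑ a, w a * ∑ i, p a i + (∑ i, ∑ a, w a * L i a ^ 2) / M := by
        simp only [mul_add, Finset.sum_add_distrib, Finset.mul_sum, Finset.sum_div]
        rw [Finset.sum_comm]
        congr 1 <;> exact Finset.sum_congr rfl fun _ _ => Finset.sum_congr rfl fun _ _ => by ring
    _ = M + (∑ i, ∑ a, w a * L i a ^ 2) / M := by simp [hp₁, hw₁]

lemma card_sub_sum_div_le_card_filter {ι : Type*} [Fintype ι] {E : ι → ℝ} (hE : ∀ i, 0 ≤ E i)
    {θ : ℝ} (hθ : 0 < θ) [DecidablePred fun i => E i ≤ θ] :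
    (Fintype.card ι : ℝ) - (∑ i, E i) / θ ≤ (Finset.univ.filter fun i => E i ≤ θ).card := by
  have hlarge : θ * (Finset.univ.filter fun i => ¬ E i ≤ θ).card ≤ ∑ i, E i :=
    calc θ * (Finset.univ.filter fun i => ¬ E i ≤ θ).card
        = ∑ i ∈ Finset.univ.filter fun i => ¬ E i ≤ θ, θ := by simp [mul_comm]
      _ ≤ ∑ i ∈ Finset.univ.filter fun i => ¬ E i ≤ θ, E i :=
          Finset.sum_le_sum fun i hi => (not_le.mp (Finset.mem_filter.mp hi).2).le
      _ ≤ ∑ i, E i :=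
          Finset.sum_le_sum_of_subset_of_nonneg (Finset.filter_subset _ _) fun i _ _ => hE i
  have hsplit := Finset.card_filter_add_card_filter_not (s := Finset.univ) (fun i => E i ≤ θ)
  rw [Finset.card_univ] at hsplit
  rw [← hsplit, Nat.cast_add, sub_le_iff_le_add, add_le_add_iff_left, le_div_iff₀ hθ]
  linarith

lemma one_add_pow_le_sqrt {x K : ℝ} {T : ℕ} (hx : 0 ≤ x) (hK : 0 < K)
    (hT : 2 * (x * T) ≤ Real.log K) : (1 + x) ^ T ≤ √K :=
  calc (1 + x) ^ T ≤ Real.exp x ^ T := by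
        gcongr; linarith [Real.add_one_le_exp x]
    _ = Real.exp (x * T) := by rw [← Real.exp_nat_mul, mul_comm]
    _ ≤ Real.exp (Real.log K / 2) := Real.exp_le_exp.mpr (by linarith)
    _ = √K := by rw [Real.exp_half, Real.exp_log hK]

def tilt (δ : ℝ) (b : Bool) : ℝ := if b then 1 + δ else 1 - δ

@[simp] lemma tilt_zero (b : Bool) : tilt 0 b = 1 := by
  cases b <;> simp [tilt]

lemma tilt_sq (δ : ℝ) (b : Bool) :
    tilt δ b ^ 2 = (1 + δ ^ 2) * tilt (2 * δ / (1 + δ ^ 2)) b := by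
  have : 1 + δ ^ 2 ≠ 0 := by positivity
  cases b <;> simp only [tilt, Bool.false_eq_true, ↓reduceIte] <;> field_simp <;> ring

lemma bern_real_singleton {δ : ℝ} (hδ : |δ| ≤ 1) (b : Bool) :
    (bern ((1 + δ) / 2)).real {b} = tilt δ b / 2 := by
  obtain ⟨hδ₀, hδ₁⟩ := abs_le.mp hδ
  have hq : 0 ≤ (1 + δ) / 2 := by linarith
  have hle : Real.toNNReal ((1 + δ) / 2) ≤ 1 := Real.toNNReal_le_one.mpr (by linarith)
  rw [measureReal_def, bern, PMF.toMeasure_apply_singleton _ _ (measurableSet_singleton b),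
    PMF.bernoulli_apply, min_eq_left hle]
  cases b
  · simp only [cond_false, ENNReal.coe_toReal, NNReal.coe_sub hle, NNReal.coe_one,
      Real.coe_toNNReal _ hq, tilt, Bool.false_eq_true, ↓reduceIte]
    ring
  · simp [tilt, hq]

instance bern.instIsProbabilityMeasure (p : ℝ) : IsProbabilityMeasure (bern p) := by
  unfold bern; infer_instance

instance lowerP.instIsProbabilityMeasure (K T : ℕ) (ε : ℝ) (j : Fin K) :
    IsProbabilityMeasure (lowerP K T ε j) := by
  unfold lowerP; infer_instance

section LowerBoundInstance

variable {K T : ℕ}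

def likelihoodRatio (ε : ℝ) (j : Fin K) (ω : Fin K → Fin T → Bool) : ℝ :=
  ∏ t, tilt ε (ω j t)

lemma lowerP_real_singleton {ε : ℝ} (hε : |ε| ≤ 1) (j : Fin K) (ω : Fin K → Fin T → Bool) :
    (lowerP K T ε j).real {ω} = (2⁻¹ : ℝ) ^ (K * T) * likelihoodRatio ε j ω := by
  have hrow : ∀ k, (if k = j then (1 + ε) / 2 else 1 / 2 : ℝ)
      = (1 + if k = j then ε else 0) / 2 := fun k => by split_ifs <;> ring
  have hδ : ∀ k, |(if k = j then ε else 0 : ℝ)| ≤ 1 := fun k => by split_ifs <;> simp [hε]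
  simp only [lowerP, hrow, measureReal_def, Measure.pi_singleton, ENNReal.toReal_prod]
  simp only [← measureReal_def, bern_real_singleton (hδ _), Finset.prod_div_distrib]
  rw [Finset.prod_eq_single j (fun k _ hk => by simp [hk]) (by simp)]
  simp [likelihoodRatio, pow_mul', div_eq_mul_inv, mul_comm]

lemma integral_lowerP {ε : ℝ} (hε : |ε| ≤ 1) (j : Fin K) (f : (Fin K → Fin T → Bool) → ℝ) :
    ∫ ω, f ω ∂(lowerP K T ε j) = ∑ ω, (2⁻¹ : ℝ) ^ (K * T) * likelihoodRatio ε j ω * f ω := by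
  rw [integral_fintype .of_finite]
  simp [lowerP_real_singleton hε]

lemma sum_likelihoodRatio {ε : ℝ} (hε : |ε| ≤ 1) (j : Fin K) :
    ∑ ω : Fin K → Fin T → Bool, (2⁻¹ : ℝ) ^ (K * T) * likelihoodRatio ε j ω = 1 := by
  simpa using (integral_lowerP hε j fun _ => 1).symm

/- `(1 ± ε)² = (1 + ε²)(1 ± 2ε/(1 + ε²))`: squaring a likelihood ratio rescales it into another
likelihood ratio, whose mean is `1`. -/
lemma sum_likelihoodRatio_sq (ε : ℝ) (j : Fin K) :
    ∑ ω : Fin K → Fin T → Bool, (2⁻¹ : ℝ) ^ (K * T) * likelihoodRatio ε j ω ^ 2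
      = (1 + ε ^ 2) ^ T := by
  have hε' : |2 * ε / (1 + ε ^ 2)| ≤ 1 := by
    rw [abs_div, abs_of_pos (by positivity : (0 : ℝ) < 1 + ε ^ 2), div_le_one (by positivity),
      abs_mul, abs_two]
    nlinarith [sq_nonneg (|ε| - 1), sq_abs ε]
  have hsq : ∀ ω : Fin K → Fin T → Bool,
      likelihoodRatio ε j ω ^ 2 = (1 + ε ^ 2) ^ T * likelihoodRatio (2 * ε / (1 + ε ^ 2)) j ω := by
    intro ω
    simp only [likelihoodRatio, ← Finset.prod_pow, tilt_sq, Finset.prod_mul_distrib,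
      Finset.prod_const, Finset.card_univ, Fintype.card_fin]
  calc _ = (1 + ε ^ 2) ^ T
        * ∑ ω, (2⁻¹ : ℝ) ^ (K * T) * likelihoodRatio (2 * ε / (1 + ε ^ 2)) j ω := by
        rw [Finset.mul_sum]
        exact Finset.sum_congr rfl fun ω _ => by rw [hsq]; ring
    _ = (1 + ε ^ 2) ^ T := by rw [sum_likelihoodRatio hε', mul_one]

end LowerBoundInstance

open scoped Classical in
/-- **No prediction rule beats Follow-the-Leader by much.** There are absolute
constants `c, d > 0` and `K₀ ≥ 1` such that for every `K ≥ K₀`, every `0 < ε < d`,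
every horizon `T` with `c ln K / (2 ε²) ≤ T ≤ c ln K / ε²` and every prediction rule
`p`, at least `⌈K/3⌉` indices `j` satisfy `E_{P_j}[p_j(ω)] ≤ 3/4`. -/
theorem no_rule_beats_FTL :
    ∃ c > (0 : ℝ), ∃ d > (0 : ℝ), ∃ K₀ : ℕ, ∃ hK₀ : 1 ≤ K₀,
      ∀ K : ℕ, ∀ hK : K₀ ≤ K, ∀ ε : ℝ, 0 < ε → ε < d →
        ∀ T : ℕ, c * Real.log K / (2 * ε ^ 2) ≤ T → (T : ℝ) ≤ c * Real.log K / ε ^ 2 →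
          ∀ p : (Fin K → Fin T → Bool) → Fin K → ℝ,
            (∀ ω k, 0 ≤ p ω k) → (∀ ω, ∑ k, p ω k = 1) →
            Nat.ceil ((K : ℝ) / 3)
              ≤ (Finset.univ.filter fun j : Fin K =>
                  (∫ ω, p ω j ∂(lowerP K T ε j)) ≤ 3 / 4).card := by
  refine ⟨1 / 2, by norm_num, 1 / 2, by norm_num, 256, by norm_num, ?_⟩
  intro K hK ε hε₀ hε₁ T _ hT p hp₀ hp₁
  have hK' : (256 : ℝ) ≤ K := by exact_mod_cast hK
  have hε : |ε| ≤ 1 := abs_le.mpr ⟨by linarith, by linarith⟩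
  have hmoment : (1 + ε ^ 2) ^ T ≤ √K := one_add_pow_le_sqrt (by positivity) (by positivity)
    (by rw [le_div_iff₀ (by positivity)] at hT; linarith)
  have hsqrt : 16 ≤ √K := Real.le_sqrt_of_sq_le (by linarith)
  have hweight : ∑ _ω : Fin K → Fin T → Bool, (2⁻¹ : ℝ) ^ (K * T) = 1 := by
    simp [← pow_mul, Nat.mul_comm T K]
  have hsum : ∑ j, ∫ ω, p ω j ∂(lowerP K T ε j) ≤ K / 2 := by
    simp only [integral_lowerP hε]
    calc _ ≤ (K : ℝ) / 4 + (∑ _j : Fin K, (1 + ε ^ 2) ^ T) / (K / 4) := by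
          simpa only [sum_likelihoodRatio_sq] using sum_sum_weight_mul_le (fun _ => by positivity)
            hweight (likelihoodRatio ε) hp₀ hp₁ (by positivity : (0 : ℝ) < K / 4)
      _ = (K : ℝ) / 4 + 4 * (1 + ε ^ 2) ^ T := by
          simp only [Finset.sum_const, Finset.card_univ, Fintype.card_fin, nsmul_eq_mul]
          field_simp
      _ ≤ K / 2 := by nlinarith [Real.mul_self_sqrt (Nat.cast_nonneg K : (0 : ℝ) ≤ K)]
  rw [Nat.ceil_le]
  calc (K : ℝ) / 3 = Fintype.card (Fin K) - (K / 2) / (3 / 4) := by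
        rw [Fintype.card_fin]; ring
    _ ≤ Fintype.card (Fin K) - (∑ j, ∫ ω, p ω j ∂(lowerP K T ε j)) / (3 / 4) := by gcongr
    _ ≤ _ := card_sub_sum_div_le_card_filter (fun j => integral_nonneg fun ω => hp₀ ω j)
        (by norm_num)
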